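/- Let k ∈ {5,6}, let G be a star k-critical subcubic simple graph, let x be a vertex of degree 1 with neighbor y, and write N_G(y) = {x, y₁, y₂} with d_G(y₁) ≥ d_G(y₂). If d_G(y₂) = 2, then k = 5 and d_G(w₁) = 3, where w₁ is the neighbor of y₂ other than y. -/

import Mathlib

/-!
Fix a star `k`-edge-coloring `c` of `G - x`. Coloring the pendant edge `xy` with `a` gives a
star coloring of `G` unless `a` is used at `y` or some path `y z u v` has `c(zu) = a` and
`c(uv) = c(yz)`. So every color appears on an edge at `y`, `y₁` or `y₂` of `G - x`; at most
`2 + 2 + 1` colors do, hence `k = 5` and these five colors are distinct.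

If `w₁` had degree `2`, the color `c(y₂w₁)` can only be blocked by a path `y y₂ w₁ w₂` with
`c(w₁w₂) = c(yy₂)`. Since `y`, `y₂`, `w₁` have degree `2` in `G - x`, recoloring `yy₂` and
`y₂w₁` only has to be checked along `y₁ y y₂ w₁ w₂` and at its ends. Either give `y₂w₁` a color
outside `{c(yy₁), c(yy₂), c(y₂w₁)}` missing at `w₂`, or, if `w₂` sees both such colors, move
`c(y₂w₁)` to `yy₂` and `c(yy₁)` to `y₂w₁`; in both cases a color is left free for `xy`.
-/

open SimpleGraph

/-- A star `k`-edge-coloring of `G`: a proper edge-coloring (adjacent edges get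
distinct colors) such that no path or cycle of length four is bicolored, i.e.
no walk on four pairwise-distinct edges has its first and third edges equally
colored and its second and fourth edges equally colored. -/
def IsStarEdgeColoring {V : Type*} (G : SimpleGraph V) (k : ℕ)
    (c : Sym2 V → Fin k) : Prop :=
  (∀ e₁ ∈ G.edgeSet, ∀ e₂ ∈ G.edgeSet, e₁ ≠ e₂ → (∃ v, v ∈ e₁ ∧ v ∈ e₂) →
      c e₁ ≠ c e₂) ∧
  (∀ v₀ v₁ v₂ v₃ v₄ : V, G.Adj v₀ v₁ → G.Adj v₁ v₂ → G.Adj v₂ v₃ → G.Adj v₃ v₄ →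
    ([s(v₀, v₁), s(v₁, v₂), s(v₂, v₃), s(v₃, v₄)] : List (Sym2 V)).Pairwise (· ≠ ·) →
    ¬(c s(v₀, v₁) = c s(v₂, v₃) ∧ c s(v₁, v₂) = c s(v₃, v₄)))

/-- `G` admits a star `k`-edge-coloring; equivalently, `χ'_s(G) ≤ k`. -/
def StarEdgeColorable {V : Type*} (G : SimpleGraph V) (k : ℕ) : Prop :=
  ∃ c : Sym2 V → Fin k, IsStarEdgeColoring G k c

/-- The graph `G - x` obtained from `G` by deleting the vertex `x`
(keeping the ambient vertex type; `x` becomes isolated, which does not affect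
edge-colorings). -/
def SimpleGraph.deleteVert {V : Type*} (G : SimpleGraph V) (x : V) : SimpleGraph V where
  Adj u w := G.Adj u w ∧ u ≠ x ∧ w ≠ x
  symm := ⟨fun u w h => ⟨h.1.symm, h.2.2, h.2.1⟩⟩
  loopless := ⟨fun u h => G.loopless.irrefl u h.1⟩

/-- `G` is star `k`-critical: `χ'_s(G) > k` but `χ'_s(G - v) ≤ k` for every vertex `v`. -/
def StarCritical {V : Type*} (G : SimpleGraph V) (k : ℕ) : Prop :=
  ¬ StarEdgeColorable G k ∧ ∀ v : V, StarEdgeColorable (G.deleteVert v) k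

/-- The set of colors used by `c` on edges of `H` incident with `u`. -/
def colorsAt {V : Type*} (H : SimpleGraph V) {k : ℕ} (c : Sym2 V → Fin k) (u : V) :
    Set (Fin k) :=
  {a | ∃ w, H.Adj u w ∧ c s(u, w) = a}

section StarEdgeColoring

variable {V : Type*} {k : ℕ}

theorem SimpleGraph.deleteVert_le (G : SimpleGraph V) (x : V) : G.deleteVert x ≤ G :=
  fun _ _ h => h.1

theorem SimpleGraph.deleteVert_adj {G : SimpleGraph V} {x u w : V} :
    (G.deleteVert x).Adj u w ↔ G.Adj u w ∧ u ≠ x ∧ w ≠ x :=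
  Iff.rfl

theorem update_apply_edge_of_ne {α : Type*} [DecidableEq V] {c : Sym2 V → α} {p q u v : V}
    (hu : u ≠ p) (hv : v ≠ p) (b : α) : Function.update c s(p, q) b s(u, v) = c s(u, v) :=
  Function.update_of_ne (by simp [hu, hv]) _ _

namespace IsStarEdgeColoring

variable {H H' : SimpleGraph V} {c : Sym2 V → Fin k}

theorem mono (hc : IsStarEdgeColoring H k c) (h : H' ≤ H) : IsStarEdgeColoring H' k c :=
  ⟨fun e₁ he₁ e₂ he₂ => hc.1 e₁ (edgeSet_mono h he₁) e₂ (edgeSet_mono h he₂),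
    fun v₀ v₁ v₂ v₃ v₄ h₁ h₂ h₃ h₄ => hc.2 v₀ v₁ v₂ v₃ v₄ (h h₁) (h h₂) (h h₃) (h h₄)⟩

theorem ne_of_adj (hc : IsStarEdgeColoring H k c) {u v w : V} (huv : H.Adj u v)
    (hvw : H.Adj v w) (huw : u ≠ w) : c s(u, v) ≠ c s(v, w) :=
  hc.1 _ huv _ hvw (by simp [huw, huv.ne]) ⟨v, by simp, by simp⟩

end IsStarEdgeColoring

theorem forall_edge_ne_of_forall_adj {H : SimpleGraph V} {c : Sym2 V → Fin k}
    (h : ∀ u v w, H.Adj u v → H.Adj v w → u ≠ w → c s(u, v) ≠ c s(v, w)) :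
    ∀ e₁ ∈ H.edgeSet, ∀ e₂ ∈ H.edgeSet, e₁ ≠ e₂ → (∃ v, v ∈ e₁ ∧ v ∈ e₂) → c e₁ ≠ c e₂ := by
  rintro e₁ he₁ e₂ he₂ hne ⟨v, hv₁, hv₂⟩
  obtain ⟨u, rfl⟩ := Sym2.mem_iff_exists.1 hv₁
  obtain ⟨w, rfl⟩ := Sym2.mem_iff_exists.1 hv₂
  rw [Sym2.eq_swap]
  exact h u v w he₁.symm he₂ (by rintro rfl; exact hne rfl)

theorem ne_of_pairwise_ne {v₀ v₁ v₂ v₃ v₄ : V}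
    (h : ([s(v₀, v₁), s(v₁, v₂), s(v₂, v₃), s(v₃, v₄)] : List (Sym2 V)).Pairwise (· ≠ ·)) :
    v₀ ≠ v₂ ∧ v₁ ≠ v₃ ∧ v₂ ≠ v₄ := by
  simp only [List.pairwise_cons, List.mem_cons, List.not_mem_nil] at h
  refine ⟨?_, ?_, ?_⟩ <;> rintro rfl <;> simp [Sym2.eq_swap] at h

theorem isStarEdgeColoring_of_deleteVert {H : SimpleGraph V} {p : V} {c c' : Sym2 V → Fin k}
    (hc : IsStarEdgeColoring (H.deleteVert p) k c)
    (hcc' : ∀ u v, u ≠ p → v ≠ p → c' s(u, v) = c s(u, v))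
    (hproper : ∀ u v w, H.Adj u v → H.Adj v w → u ≠ w → (p = u ∨ p = v) →
      c' s(u, v) ≠ c' s(v, w))
    (hwalk : ∀ v₀ v₁ v₂ v₃ v₄, H.Adj v₀ v₁ → H.Adj v₁ v₂ → H.Adj v₂ v₃ → H.Adj v₃ v₄ →
      v₀ ≠ v₂ → v₁ ≠ v₃ → v₂ ≠ v₄ → (p = v₀ ∨ p = v₁ ∨ p = v₂) →
      c' s(v₀, v₁) = c' s(v₂, v₃) → c' s(v₁, v₂) ≠ c' s(v₃, v₄)) :
    IsStarEdgeColoring H k c' := by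
  refine ⟨forall_edge_ne_of_forall_adj fun u v w huv hvw huw => ?_,
    fun v₀ v₁ v₂ v₃ v₄ a₁ a₂ a₃ a₄ hne ⟨e₁₃, e₂₄⟩ => ?_⟩
  · by_cases hp : p = u ∨ p = v
    · exact hproper u v w huv hvw huw hp
    by_cases hw : p = w
    · rw [Sym2.eq_swap (a := u), Sym2.eq_swap (a := v) (b := w)]
      exact (hproper w v u hvw.symm huv.symm huw.symm (.inl hw)).symm
    push Not at hp
    rw [hcc' u v (Ne.symm hp.1) (Ne.symm hp.2), hcc' v w (Ne.symm hp.2) (Ne.symm hw)]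
    exact hc.ne_of_adj ⟨huv, Ne.symm hp.1, Ne.symm hp.2⟩ ⟨hvw, Ne.symm hp.2, Ne.symm hw⟩ huw
  obtain ⟨h₀₂, h₁₃, h₂₄⟩ := ne_of_pairwise_ne hne
  by_cases hp : p = v₀ ∨ p = v₁ ∨ p = v₂
  · exact hwalk v₀ v₁ v₂ v₃ v₄ a₁ a₂ a₃ a₄ h₀₂ h₁₃ h₂₄ hp e₁₃ e₂₄
  by_cases hp' : p = v₄ ∨ p = v₃
  · refine hwalk v₄ v₃ v₂ v₁ v₀ a₄.symm a₃.symm a₂.symm a₁.symm h₂₄.symm h₁₃.symm h₀₂.symm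
      (by tauto) ?_ ?_
    · rw [Sym2.eq_swap, e₂₄.symm, Sym2.eq_swap]
    · rw [Sym2.eq_swap, ← e₁₃, Sym2.eq_swap]
  push Not at hp hp'
  obtain ⟨n₀, n₁, n₂⟩ := hp
  obtain ⟨n₄, n₃⟩ := hp'
  refine hc.2 v₀ v₁ v₂ v₃ v₄ ⟨a₁, Ne.symm n₀, Ne.symm n₁⟩ ⟨a₂, Ne.symm n₁, Ne.symm n₂⟩
    ⟨a₃, Ne.symm n₂, Ne.symm n₃⟩ ⟨a₄, Ne.symm n₃, Ne.symm n₄⟩ hne ?_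
  rw [← hcc' _ _ (Ne.symm n₀) (Ne.symm n₁), ← hcc' _ _ (Ne.symm n₁) (Ne.symm n₂),
    ← hcc' _ _ (Ne.symm n₂) (Ne.symm n₃), ← hcc' _ _ (Ne.symm n₃) (Ne.symm n₄)]
  exact ⟨e₁₃, e₂₄⟩

theorem starEdgeColorable_of_leaf {G : SimpleGraph V} {x y : V} {c : Sym2 V → Fin k}
    (hx : ∀ z, G.Adj x z → z = y) (hc : IsStarEdgeColoring (G.deleteVert x) k c) (a : Fin k)
    (hay : ∀ z, G.Adj y z → z ≠ x → c s(y, z) ≠ a)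
    (hpath : ∀ z u v, G.Adj y z → G.Adj z u → G.Adj u v → z ≠ x → u ≠ y → v ≠ z →
      c s(z, u) = a → c s(y, z) ≠ c s(u, v)) :
    StarEdgeColorable G k := by
  classical
  have hcc' : ∀ u v, u ≠ x → v ≠ x → Function.update c s(x, y) a s(u, v) = c s(u, v) :=
    fun _ _ hu hv => update_apply_edge_of_ne hu hv a
  refine ⟨_, isStarEdgeColoring_of_deleteVert hc hcc' ?_ ?_⟩
  · rintro u v w huv hvw huw (rfl | rfl)
    · have hv := hx v huv
      subst v
      rw [Function.update_self, hcc' _ _ huv.ne.symm (Ne.symm huw)]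
      exact (hay w hvw (Ne.symm huw)).symm
    · exact absurd ((hx u huv.symm).trans (hx w hvw).symm) huw
  · rintro v₀ v₁ v₂ v₃ v₄ a₁ a₂ a₃ a₄ h₀₂ h₁₃ h₂₄ (rfl | rfl | rfl)
    · have hv₁ := hx v₁ a₁
      subst v₁
      have n₂ : v₂ ≠ x := Ne.symm h₀₂
      have n₃ : v₃ ≠ x := fun h => a₂.ne (hx v₂ (h ▸ a₃.symm)).symm
      have n₄ : v₄ ≠ x := fun h => h₁₃ (hx v₃ (h ▸ a₄.symm)).symm
      rw [Function.update_self, hcc' _ _ n₂ n₃, hcc' _ _ a₁.ne.symm n₂, hcc' _ _ n₃ n₄]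
      exact fun h => hpath v₂ v₃ v₄ a₂ a₃ a₄ n₂ (Ne.symm h₁₃) (Ne.symm h₂₄) h.symm
    · exact absurd ((hx v₀ a₁.symm).trans (hx v₂ a₂).symm) h₀₂
    · exact absurd ((hx v₁ a₂.symm).trans (hx v₃ a₃).symm) h₁₃

theorem starEdgeColorable_of_leaf_of_free {G : SimpleGraph V} {x y : V} {c : Sym2 V → Fin k}
    (hx : ∀ z, G.Adj x z → z = y) (hc : IsStarEdgeColoring (G.deleteVert x) k c) (a : Fin k)
    (ha : ∀ z, G.Adj y z → z ≠ x → c s(y, z) ≠ a ∧ ∀ u, G.Adj z u → u ≠ y → c s(z, u) ≠ a) :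
    StarEdgeColorable G k :=
  starEdgeColorable_of_leaf hx hc a (fun z hz hzx => (ha z hz hzx).1)
    fun z u _ hz hzu _ hzx huy _ hcu => absurd hcu ((ha z hz hzx).2 u hzu huy)

theorem isStarEdgeColoring_of_deleteVert_of_path {H : SimpleGraph V} {c c' : Sym2 V → Fin k}
    {y₁ y p w₁ w₂ : V} (hc : IsStarEdgeColoring (H.deleteVert p) k c)
    (hcc' : ∀ u v, u ≠ p → v ≠ p → c' s(u, v) = c s(u, v))
    (hy : ∀ z, H.Adj y z ↔ z = y₁ ∨ z = p) (hp : ∀ z, H.Adj p z ↔ z = y ∨ z = w₁)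
    (hw₁ : ∀ z, H.Adj w₁ z ↔ z = p ∨ z = w₂)
    (h₁ : c' s(p, y) ≠ c' s(y, y₁)) (h₂ : c' s(p, y) ≠ c' s(p, w₁))
    (h₃ : c' s(p, w₁) ≠ c' s(w₁, w₂))
    (h₄ : ¬(c' s(p, w₁) = c' s(y, y₁) ∧ c' s(p, y) = c' s(w₁, w₂)))
    (hy₁ : ∀ u, H.Adj y₁ u → u ≠ y → c' s(y₁, u) ≠ c' s(p, y))
    (hw₂ : ∀ u, H.Adj w₂ u → u ≠ w₁ → c' s(w₂, u) ≠ c' s(p, w₁)) :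
    IsStarEdgeColoring H k c' := by
  refine isStarEdgeColoring_of_deleteVert hc hcc' ?_ ?_
  · rintro u v w huv hvw huw (rfl | rfl)
    · rcases (hp v).1 huv with rfl | rfl
      · obtain rfl := ((hy w).1 hvw).resolve_right (Ne.symm huw)
        exact h₁
      · obtain rfl := ((hw₁ w).1 hvw).resolve_left (Ne.symm huw)
        exact h₃
    · rcases (hp u).1 huv.symm with rfl | rfl <;> rcases (hp w).1 hvw with rfl | rfl
      all_goals first
        | exact absurd rfl huw
        | simpa [Sym2.eq_swap] using h₂
        | simpa [Sym2.eq_swap] using h₂.symm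
  · rintro v₀ v₁ v₂ v₃ v₄ a₁ a₂ a₃ a₄ h₀₂ h₁₃ h₂₄ (rfl | rfl | rfl)
    · rcases (hp v₁).1 a₁ with rfl | rfl
      · obtain rfl := ((hy v₂).1 a₂).resolve_right (Ne.symm h₀₂)
        exact fun h _ => hy₁ v₃ a₃ (Ne.symm h₁₃) h.symm
      · obtain rfl := ((hw₁ v₂).1 a₂).resolve_left (Ne.symm h₀₂)
        exact fun h _ => hw₂ v₃ a₃ (Ne.symm h₁₃) h.symm
    · rcases (hp v₀).1 a₁.symm with rfl | rfl <;> rcases (hp v₂).1 a₂ with rfl | rfl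
      · exact absurd rfl h₀₂
      · obtain rfl := ((hw₁ v₃).1 a₃).resolve_left (Ne.symm h₁₃)
        exact fun _ h => hw₂ v₄ a₄ (Ne.symm h₂₄) h.symm
      · obtain rfl := ((hy v₃).1 a₃).resolve_right (Ne.symm h₁₃)
        exact fun _ h => hy₁ v₄ a₄ (Ne.symm h₂₄) h.symm
      · exact absurd rfl h₀₂
    · rcases (hp v₁).1 a₂.symm with rfl | rfl <;> rcases (hp v₃).1 a₃ with rfl | rfl
      · exact absurd rfl h₁₃
      · obtain rfl := ((hy v₀).1 a₁.symm).resolve_right h₀₂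
        obtain rfl := ((hw₁ v₄).1 a₄).resolve_left (Ne.symm h₂₄)
        exact fun h h' =>
          h₄ ⟨by simpa [Sym2.eq_swap] using h.symm, by simpa [Sym2.eq_swap] using h'⟩
      · obtain rfl := ((hw₁ v₀).1 a₁.symm).resolve_left h₀₂
        obtain rfl := ((hy v₄).1 a₄).resolve_right (Ne.symm h₂₄)
        exact fun h h' =>
          h₄ ⟨by simpa [Sym2.eq_swap] using h', by simpa [Sym2.eq_swap] using h.symm⟩
      · exact absurd rfl h₁₃

theorem IsStarEdgeColoring.update_path [DecidableEq V] {H : SimpleGraph V}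
    {c : Sym2 V → Fin k} {y₁ y p w₁ w₂ : V} (hc : IsStarEdgeColoring H k c)
    (hy : ∀ z, H.Adj y z ↔ z = y₁ ∨ z = p)
    (hp : ∀ z, H.Adj p z ↔ z = y ∨ z = w₁) (hw₁ : ∀ z, H.Adj w₁ z ↔ z = p ∨ z = w₂)
    (hy₁p : y₁ ≠ p) (hpw₂ : p ≠ w₂) (hyw₁ : y ≠ w₁) (hy₁w₁ : y₁ ≠ w₁) {β δ : Fin k}
    (h₁ : β ≠ c s(y, y₁)) (h₂ : β ≠ δ) (h₃ : δ ≠ c s(w₁, w₂))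
    (h₄ : ¬(δ = c s(y, y₁) ∧ β = c s(w₁, w₂)))
    (hβ : ∀ u, H.Adj y₁ u → u ≠ y → c s(y₁, u) ≠ β)
    (hδ : ∀ u, H.Adj w₂ u → u ≠ w₁ → c s(w₂, u) ≠ δ) :
    IsStarEdgeColoring H k (Function.update (Function.update c s(p, y) β) s(p, w₁) δ) := by
  have hyp : y ≠ p := H.ne_of_adj ((hy p).2 (.inr rfl))
  have hw₁p : w₁ ≠ p := (H.ne_of_adj ((hp w₁).2 (.inr rfl))).symm
  have hy₁p' : ¬H.Adj y₁ p := fun h => by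
    rcases (hp y₁).1 h.symm with h' | h'
    exacts [H.ne_of_adj ((hy y₁).2 (.inl rfl)) h'.symm, hy₁w₁ h']
  have hw₂p' : ¬H.Adj w₂ p := fun h => by
    rcases (hp w₂).1 h.symm with rfl | h'
    · rcases (hy w₁).1 ((hw₁ w₂).2 (.inr rfl)).symm with h' | h'
      exacts [hy₁w₁ h'.symm, hw₁p h']
    · exact H.ne_of_adj ((hw₁ w₂).2 (.inr rfl)) h'.symm
  have hcc' : ∀ u v, u ≠ p → v ≠ p →
      Function.update (Function.update c s(p, y) β) s(p, w₁) δ s(u, v) = c s(u, v) :=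
    fun u v hu hv => by rw [update_apply_edge_of_ne hu hv, update_apply_edge_of_ne hu hv]
  have hc'y : Function.update (Function.update c s(p, y) β) s(p, w₁) δ s(p, y) = β := by
    rw [Function.update_of_ne (by simp [hyw₁, hyp]), Function.update_self]
  have hc'w₁ : Function.update (Function.update c s(p, y) β) s(p, w₁) δ s(p, w₁) = δ :=
    Function.update_self ..
  refine isStarEdgeColoring_of_deleteVert_of_path (hc.mono (deleteVert_le _ _)) hcc' hy hp hw₁
    ?_ ?_ ?_ ?_ (fun u hu huy => ?_) fun u hu huw₁ => ?_ <;>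
    simp only [hc'y, hc'w₁, hcc' _ _ hyp hy₁p, hcc' _ _ hw₁p hpw₂.symm]
  · exact h₁
  · exact h₂
  · exact h₃
  · exact h₄
  · rw [hcc' _ _ hy₁p fun h => hy₁p' (h ▸ hu)]
    exact hβ u hu huy
  · rw [hcc' _ _ hpw₂.symm fun h => hw₂p' (h ▸ hu)]
    exact hδ u hu huw₁

section Finite

variable [Fintype V] [DecidableEq V] {G : SimpleGraph V} [DecidableRel G.Adj]

theorem SimpleGraph.adj_iff_of_degree_le_two {u v w : V} (hu : G.degree u ≤ 2)
    (huv : G.Adj u v) (huw : G.Adj u w) (hvw : v ≠ w) (z : V) :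
    G.Adj u z ↔ z = v ∨ z = w := by
  have hsub : ({v, w} : Finset V) ⊆ G.neighborFinset u := by
    simp [Finset.insert_subset_iff, huv, huw]
  have heq := Finset.eq_of_subset_of_card_le hsub (by rw [Finset.card_pair hvw]; exact hu)
  rw [← mem_neighborFinset, ← heq]
  simp

def colorsAway (G : SimpleGraph V) [DecidableRel G.Adj] (c : Sym2 V → Fin k) (u v : V) :
    Finset (Fin k) :=
  ((G.neighborFinset u).erase v).image fun w => c s(u, w)

theorem mem_colorsAway {c : Sym2 V → Fin k} {u v : V} {a : Fin k} :
    a ∈ colorsAway G c u v ↔ ∃ w, G.Adj u w ∧ w ≠ v ∧ c s(u, w) = a := by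
  simp only [colorsAway, Finset.mem_image, Finset.mem_erase, mem_neighborFinset, and_assoc]
  exact exists_congr fun _ => and_left_comm

theorem card_colorsAway_le {c : Sym2 V → Fin k} {u v : V} (huv : G.Adj u v) :
    (colorsAway G c u v).card ≤ G.degree u - 1 :=
  Finset.card_image_le.trans
    (Finset.card_erase_of_mem ((mem_neighborFinset G u v).2 huv)).le

theorem colorsAway_eq_singleton {c : Sym2 V → Fin k} {u v w : V}
    (hu : ∀ z, G.Adj u z ↔ z = v ∨ z = w) (hvw : v ≠ w) :
    colorsAway G c u v = {c s(u, w)} := by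
  ext a
  simp only [mem_colorsAway, hu, Finset.mem_singleton]
  grind

end Finite

theorem exists_recoloring {α : Type*} [Fintype α] [DecidableEq α] (hα : 5 ≤ Fintype.card α)
    {A B C : α} {T S : Finset α} (hS : S.card ≤ 2) (hBA : B ≠ A) (hCA : C ≠ A) (hCB : C ≠ B)
    (hBT : B ∉ T) (hCT : C ∉ T) :
    ∃ β δ a : α, β ≠ A ∧ β ≠ δ ∧ δ ≠ B ∧ ¬(δ = A ∧ β = B) ∧ β ∉ T ∧ δ ∉ S ∧
      a ≠ A ∧ a ≠ β ∧ a ≠ δ ∧ a ∉ T := by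
  by_cases h : ∃ γ ∉ S, γ ≠ A ∧ γ ≠ B ∧ γ ≠ C
  · obtain ⟨γ, hγS, hγA, hγB, hγC⟩ := h
    exact ⟨B, γ, C, hBA, hγB.symm, hγB, fun h => hγA h.1, hBT, hγS, hCA, hCB, hγC.symm, hCT⟩
  -- otherwise the at least three colors outside `S` all lie in `{A, B, C}`, so `A ∉ S`
  have hAS : A ∉ S := by
    intro hA
    have hsub : Sᶜ ⊆ {B, C} := fun γ hγ => by
      have hγ : γ ∉ S := Finset.mem_compl.1 hγ
      simp only [Finset.mem_insert, Finset.mem_singleton]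
      by_contra! hne
      exact h ⟨γ, hγ, fun hγA => hγ (hγA ▸ hA), hne.1, hne.2⟩
    have := Finset.card_le_card hsub
    rw [Finset.card_compl] at this
    have := Finset.card_le_two (a := B) (b := C)
    omega
  exact ⟨C, A, B, hCA, hCA, hBA.symm, fun h => hCB h.2, hCT, hAS, hBA, hCB.symm, hBA, hBT⟩

section Pendant

variable [Fintype V] [DecidableEq V] {G : SimpleGraph V} [DecidableRel G.Adj]
  {x y y₁ y₂ w₁ w₂ : V} {c : Sym2 V → Fin k}

theorem mem_colors_of_not_starEdgeColorable (hG : ¬StarEdgeColorable G k)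
    (hx : ∀ z, G.Adj x z → z = y) (hy : ∀ z, G.Adj y z ↔ z = x ∨ z = y₁ ∨ z = y₂)
    (hc : IsStarEdgeColoring (G.deleteVert x) k c) (a : Fin k) :
    a ∈ insert (c s(y, y₁)) (insert (c s(y, y₂)) (colorsAway G c y₁ y ∪ colorsAway G c y₂ y)) := by
  by_contra ha
  simp only [Finset.mem_insert, Finset.mem_union, mem_colorsAway, not_or, not_exists,
    not_and] at ha
  refine hG (starEdgeColorable_of_leaf_of_free hx hc a fun z hz hzx => ?_)
  rcases (hy z).1 hz with rfl | rfl | rfl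
  exacts [absurd rfl hzx, ⟨Ne.symm ha.1, ha.2.2.1⟩, ⟨Ne.symm ha.2.1, ha.2.2.2⟩]

theorem le_five_of_not_starEdgeColorable (hG : ¬StarEdgeColorable G k)
    (hx : ∀ z, G.Adj x z → z = y) (hy : ∀ z, G.Adj y z ↔ z = x ∨ z = y₁ ∨ z = y₂)
    (hc : IsStarEdgeColoring (G.deleteVert x) k c)
    (hy₁ : G.degree y₁ ≤ 3) (hy₂ : G.degree y₂ ≤ 2) : k ≤ 5 := by
  have h₁ := card_colorsAway_le (c := c) ((hy y₁).2 (by simp)).symm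
  have h₂ := card_colorsAway_le (c := c) ((hy y₂).2 (by simp)).symm
  calc k = (Finset.univ : Finset (Fin k)).card := by simp
    _ ≤ _ := Finset.card_le_card fun a _ => mem_colors_of_not_starEdgeColorable hG hx hy hc a
    _ ≤ 5 := by
      grw [Finset.card_insert_le, Finset.card_insert_le, Finset.card_union_le]
      omega

theorem notMem_colors_of_not_starEdgeColorable (hG : ¬StarEdgeColorable G k)
    (hx : ∀ z, G.Adj x z → z = y) (hy : ∀ z, G.Adj y z ↔ z = x ∨ z = y₁ ∨ z = y₂)
    (hc : IsStarEdgeColoring (G.deleteVert x) k c) (hk : 5 ≤ k) (hy₁ : G.degree y₁ ≤ 3)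
    (hy₂ : ∀ z, G.Adj y₂ z ↔ z = y ∨ z = w₁) (hyw₁ : y ≠ w₁) :
    c s(y₂, w₁) ∉ insert (c s(y, y₂)) (insert (c s(y, y₁)) (colorsAway G c y₁ y)) ∧
      c s(y, y₂) ∉ insert (c s(y, y₁)) (colorsAway G c y₁ y) ∧
      2 ≤ (colorsAway G c y₁ y).card := by
  have hT := card_colorsAway_le (c := c) ((hy y₁).2 (by simp)).symm
  have h5 : 5 ≤ (insert (c s(y₂, w₁)) (insert (c s(y, y₂))
      (insert (c s(y, y₁)) (colorsAway G c y₁ y)))).card := by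
    refine hk.trans ((Finset.card_fin k).symm.trans_le (Finset.card_le_card fun a _ => ?_))
    have ha := mem_colors_of_not_starEdgeColorable hG hx hy hc a
    rw [colorsAway_eq_singleton hy₂ hyw₁] at ha
    simp only [Finset.mem_insert, Finset.mem_union, Finset.mem_singleton] at ha ⊢
    tauto
  refine ⟨fun h => ?_, fun h => ?_, ?_⟩
  · rw [Finset.insert_eq_of_mem h] at h5
    grw [Finset.card_insert_le, Finset.card_insert_le] at h5
    omega
  · rw [Finset.insert_eq_of_mem h] at h5
    grw [Finset.card_insert_le, Finset.card_insert_le] at h5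
    omega
  · grw [Finset.card_insert_le, Finset.card_insert_le, Finset.card_insert_le] at h5
    omega

theorem exists_adj_color_eq_of_not_starEdgeColorable (hG : ¬StarEdgeColorable G k)
    (hx : ∀ z, G.Adj x z → z = y) (hy : ∀ z, G.Adj y z ↔ z = x ∨ z = y₁ ∨ z = y₂)
    (hc : IsStarEdgeColoring (G.deleteVert x) k c) (hy₂ : ∀ z, G.Adj y₂ z ↔ z = y ∨ z = w₁)
    (hC : c s(y₂, w₁) ∉ insert (c s(y, y₂)) (insert (c s(y, y₁)) (colorsAway G c y₁ y))) :
    ∃ w₂, G.Adj w₁ w₂ ∧ w₂ ≠ y₂ ∧ c s(w₁, w₂) = c s(y, y₂) := by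
  simp only [Finset.mem_insert, mem_colorsAway, not_or, not_exists, not_and] at hC
  by_contra! h
  refine hG (starEdgeColorable_of_leaf hx hc (c s(y₂, w₁)) (fun z hz hzx => ?_)
    fun z u v hz hzu huv hzx huy hvz hcu => ?_)
  · rcases (hy z).1 hz with rfl | rfl | rfl
    exacts [absurd rfl hzx, Ne.symm hC.2.1, Ne.symm hC.1]
  · rcases (hy z).1 hz with rfl | rfl | rfl
    · exact absurd rfl hzx
    · exact absurd hcu (hC.2.2 u hzu huy)
    · obtain rfl := ((hy₂ u).1 hzu).resolve_left huy
      exact (h v huv hvz).symm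

theorem starEdgeColorable_of_recoloring (hx : ∀ z, G.Adj x z → z = y)
    (hy : ∀ z, G.Adj y z ↔ z = x ∨ z = y₁ ∨ z = y₂) (hxy₁ : x ≠ y₁) (hxy₂ : x ≠ y₂)
    (hy₁y₂ : y₁ ≠ y₂) (hc : IsStarEdgeColoring (G.deleteVert x) k c)
    (hy₂ : ∀ z, G.Adj y₂ z ↔ z = y ∨ z = w₁) (hw₁ : ∀ z, G.Adj w₁ z ↔ z = y₂ ∨ z = w₂)
    (hyw₁ : y ≠ w₁) (hy₁w₁ : y₁ ≠ w₁) (hy₂w₂ : y₂ ≠ w₂) {β δ a : Fin k}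
    (h₁ : β ≠ c s(y, y₁)) (h₂ : β ≠ δ) (h₃ : δ ≠ c s(w₁, w₂))
    (h₄ : ¬(δ = c s(y, y₁) ∧ β = c s(w₁, w₂))) (hβ : β ∉ colorsAway G c y₁ y)
    (hδ : δ ∉ colorsAway G c w₂ w₁) (ha₁ : a ≠ c s(y, y₁)) (haβ : a ≠ β) (haδ : a ≠ δ)
    (ha : a ∉ colorsAway G c y₁ y) :
    StarEdgeColorable G k := by
  simp only [mem_colorsAway, not_exists, not_and] at hβ hδ ha
  have hyx : y ≠ x := G.ne_of_adj ((hy x).2 (.inl rfl))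
  have hyy₁ : y ≠ y₁ := G.ne_of_adj ((hy y₁).2 (by simp))
  have hyy₂ : y ≠ y₂ := G.ne_of_adj ((hy y₂).2 (by simp))
  have hw₁x : w₁ ≠ x := fun h => hyy₂ (hx y₂ (h ▸ ((hy₂ w₁).2 (.inr rfl)).symm)).symm
  have hw₂x : w₂ ≠ x := fun h => hyw₁ (hx w₁ (h ▸ ((hw₁ w₂).2 (.inr rfl)).symm)).symm
  have hyH : ∀ z, (G.deleteVert x).Adj y z ↔ z = y₁ ∨ z = y₂ := by grind [deleteVert_adj]
  have hy₂H : ∀ z, (G.deleteVert x).Adj y₂ z ↔ z = y ∨ z = w₁ := by grind [deleteVert_adj]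
  have hw₁H : ∀ z, (G.deleteVert x).Adj w₁ z ↔ z = y₂ ∨ z = w₂ := by grind [deleteVert_adj]
  have hstar := hc.update_path hyH hy₂H hw₁H hy₁y₂ hy₂w₂ hyw₁ hy₁w₁ h₁ h₂ h₃ h₄
    (fun u hu huy => hβ u hu.1 huy) fun u hu huw₁ => hδ u hu.1 huw₁
  refine starEdgeColorable_of_leaf_of_free hx hstar a fun z hz hzx => ?_
  rcases (hy z).1 hz with h | h | h <;> subst z
  · exact absurd rfl hzx
  · refine ⟨?_, fun u hu huy => ?_⟩
    · rw [update_apply_edge_of_ne hyy₂ hy₁y₂, update_apply_edge_of_ne hyy₂ hy₁y₂]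
      exact ha₁.symm
    · have huy₂ : u ≠ y₂ := by
        rintro rfl
        rcases (hy₂ y₁).1 hu.symm with h | h
        exacts [hyy₁ h.symm, hy₁w₁ h]
      rw [update_apply_edge_of_ne hy₁y₂ huy₂, update_apply_edge_of_ne hy₁y₂ huy₂]
      exact ha u hu huy
  · refine ⟨?_, fun u hu huy => ?_⟩
    · rw [Sym2.eq_swap, Function.update_of_ne (by simp [hyw₁, hyy₂]), Function.update_self]
      exact haβ.symm
    · obtain rfl := ((hy₂ u).1 hu).resolve_left huy
      rw [Function.update_self]
      exact haδ.symm

theorem two_lt_degree_of_not_starEdgeColorable (hG : ¬StarEdgeColorable G k)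
    (hx : ∀ z, G.Adj x z → z = y) (hy : ∀ z, G.Adj y z ↔ z = x ∨ z = y₁ ∨ z = y₂)
    (hxy₁ : x ≠ y₁) (hxy₂ : x ≠ y₂) (hy₁y₂ : y₁ ≠ y₂)
    (hc : IsStarEdgeColoring (G.deleteVert x) k c) (hk : 5 ≤ k) (hdeg : ∀ v, G.degree v ≤ 3)
    (hy₂ : ∀ z, G.Adj y₂ z ↔ z = y ∨ z = w₁) (hyw₁ : y ≠ w₁) : 2 < G.degree w₁ := by
  by_contra! hw₁
  obtain ⟨hC, hB, hT⟩ := notMem_colors_of_not_starEdgeColorable hG hx hy hc hk (hdeg y₁) hy₂ hyw₁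
  have hy₁w₁ : y₁ ≠ w₁ := by
    rintro rfl
    have := card_colorsAway_le (c := c) ((hy y₁).2 (by simp)).symm
    omega
  obtain ⟨w₂, hw₁w₂, hw₂y₂, hcw₂⟩ :=
    exists_adj_color_eq_of_not_starEdgeColorable hG hx hy hc hy₂ hC
  have hw₁ := adj_iff_of_degree_le_two hw₁ ((hy₂ w₁).2 (.inr rfl)).symm hw₁w₂ hw₂y₂.symm
  simp only [Finset.mem_insert, not_or] at hC hB
  obtain ⟨β, δ, a, h₁, h₂, h₃, h₄, hβ, hδ, ha₁, haβ, haδ, ha⟩ :=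
    exists_recoloring (by simpa using hk) ((card_colorsAway_le (c := c) hw₁w₂.symm).trans
      (by have := hdeg w₂; omega)) hB.1 hC.2.1 hC.1 hB.2 hC.2.2
  rw [← hcw₂] at h₃ h₄
  exact hG (starEdgeColorable_of_recoloring hx hy hxy₁ hxy₂ hy₁y₂ hc hy₂ hw₁ hyw₁ hy₁w₁
    hw₂y₂.symm h₁ h₂ h₃ h₄ hβ hδ ha₁ haβ haδ ha)

end Pendant

end StarEdgeColoring

theorem lemma1d_general {V : Type*} [Fintype V] (G : SimpleGraph V)
    [DecidableRel G.Adj] (hsub : ∀ v : V, G.degree v ≤ 3)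
    (k : ℕ) (hk : k = 5 ∨ k = 6) (hcrit : StarCritical G k)
    (x y y₁ y₂ : V) (hx : G.degree x = 1) (hxy : G.Adj x y)
    (hxy₁ : x ≠ y₁) (hxy₂ : x ≠ y₂) (hy₁y₂ : y₁ ≠ y₂)
    (hN : G.neighborSet y = {x, y₁, y₂})
    (hy₂deg : G.degree y₂ = 2) :
    k = 5 ∧ ∀ w₁ : V, G.Adj y₂ w₁ → w₁ ≠ y → G.degree w₁ = 3 := by
  classical
  obtain ⟨hG, hdel⟩ := hcrit
  obtain ⟨c, hc⟩ := hdel x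
  have hleaf : ∀ z, G.Adj x z → z = y := fun z hz =>
    (degree_eq_one_iff_existsUnique_adj.1 hx).unique hz hxy
  have hy : ∀ z, G.Adj y z ↔ z = x ∨ z = y₁ ∨ z = y₂ := fun z => by
    simpa using Set.ext_iff.1 hN z
  have hk5 : k = 5 := by
    have := le_five_of_not_starEdgeColorable hG hleaf hy hc (hsub y₁) hy₂deg.le
    omega
  refine ⟨hk5, fun w₁ hy₂w₁ hw₁y => ?_⟩
  have hy₂ := adj_iff_of_degree_le_two hy₂deg.le ((hy y₂).2 (by simp)).symm hy₂w₁ hw₁y.symm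
  have := two_lt_degree_of_not_starEdgeColorable hG hleaf hy hxy₁ hxy₂ hy₁y₂ hc hk5.ge hsub hy₂
    hw₁y.symm
  have := hsub w₁
  omega

/-- Lemma 1(d): if `d(y₂) = 2`, then `k = 5` and the neighbor `w₁` of `y₂` other
than `y` has degree 3. -/
theorem lemma1d {V : Type*} [Fintype V] [DecidableEq V] (G : SimpleGraph V)
    [DecidableRel G.Adj] (hsub : ∀ v : V, G.degree v ≤ 3)
    (k : ℕ) (hk : k = 5 ∨ k = 6) (hcrit : StarCritical G k)
    (x y y₁ y₂ : V) (hx : G.degree x = 1) (hxy : G.Adj x y)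
    (hxy₁ : x ≠ y₁) (hxy₂ : x ≠ y₂) (hy₁y₂ : y₁ ≠ y₂)
    (hN : G.neighborSet y = {x, y₁, y₂})
    (hdeg : G.degree y₂ ≤ G.degree y₁)
    (hy₂deg : G.degree y₂ = 2) :
    k = 5 ∧ ∀ w₁ : V, G.Adj y₂ w₁ → w₁ ≠ y → G.degree w₁ = 3 :=
  lemma1d_general G hsub k hk hcrit x y y₁ y₂ hx hxy hxy₁ hxy₂ hy₁y₂ hN hy₂deg
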